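/- Let N be an even positive integer with N > 2d/η. Then: (i) |r_j| ≤ (1/2)·r^{−|j|}·|log η| for every j ∈ ℤ; (ii) |r_j − r̂_j| ≤ 2·r^{j−N}·|log η| for every integer 0 ≤ j ≤ N/2. -/

import Mathlib

open scoped BigOperators

/-- Evaluation of the Laurent polynomial `b(z) = ∑_{j=−d}^{d} c_j z^j`. -/
noncomputable def laurentEval (c : ℤ → ℂ) (d : ℕ) (z : ℂ) : ℂ :=
  ∑ j ∈ Finset.Icc (-(d : ℤ)) (d : ℤ), c j * z ^ j

/-- The `j`-th Fourier coefficient of a function `u` on the unit circle: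
`(1/2π) ∫₀^{2π} e^{−ijθ} u(e^{iθ}) dθ`. -/
noncomputable def circleFourierCoeff (u : ℂ → ℂ) (j : ℤ) : ℂ :=
  (1 / (2 * Real.pi) : ℂ) *
    ∫ θ in (0:ℝ)..(2 * Real.pi),
      (Complex.exp (Complex.I * θ)) ^ (-j) * u (Complex.exp (Complex.I * θ))

/-- The discrete Fourier transform on the `N`-th roots of unity:
`F^N(u)(j) = (1/N) ∑_{ℓ=0}^{N−1} z_ℓ^{−j} u(z_ℓ)` with `z_ℓ = e^{2πiℓ/N}`. -/
noncomputable def discreteFourier (u : ℂ → ℂ) (N : ℕ) (j : ℤ) : ℂ :=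
  (N : ℂ)⁻¹ * ∑ ℓ ∈ Finset.range N,
    (Complex.exp (2 * Real.pi * Complex.I * ℓ / N)) ^ (-j) *
      u (Complex.exp (2 * Real.pi * Complex.I * ℓ / N))

/-- The function `z ↦ log √(1 − |b(z)|²)` (as a complex-valued function). -/
noncomputable def logAbsB (c : ℤ → ℂ) (d : ℕ) (z : ℂ) : ℂ :=
  (Real.log (Real.sqrt (1 - ‖laurentEval c d z‖^2)) : ℂ)


/-!
On the unit circle `log √(1 - |b|²) = -∑_{k ≥ 1} |b|^{2k} / (2k)`, and `|b|^{2k} = (b b̄)^k` is a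
Laurent polynomial of degree `2dk` bounded by `(1-η)^{2k} = r^{-4dk}`. Its Fourier coefficients
vanish beyond `2dk` and are at most `(1-η)^{2k} ≤ r^{-|j|} (1-η)^k` below, which summed over `k`
gives (i). The discrete transform of a Laurent polynomial of degree `M` adds to its `j`-th
coefficient the aliased ones of index `j + sN`, `s ≠ 0`: at most `2M/N` of them, each of index at
least `N - |j|` in absolute value. For `|b|^{2k}` this costs
`(2d/N) r^{j-N} (1-η)^k ≤ η r^{j-N} (1-η)^k`, and summing over `k` gives (ii). Dominated
convergence exchanges the series with the integral.
-/

open Complex Finset ComplexConjugate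
open scoped Real

lemma norm_exp_two_pi_I_mul_div (ℓ N : ℕ) : ‖exp (2 * π * I * ℓ / N)‖ = 1 := by
  rw [show (2 * π * I * ℓ / N : ℂ) = ((2 * π * ℓ / N : ℝ) : ℂ) * I by push_cast; ring,
    norm_exp_ofReal_mul_I]

lemma continuous_exp_I_mul_zpow (m : ℤ) : Continuous fun θ : ℝ => exp (I * θ) ^ m :=
  (by fun_prop : Continuous fun θ : ℝ => exp (I * θ)).zpow₀ m fun _ => .inl (exp_ne_zero _)

lemma integral_exp_I_mul_zpow (p : ℤ) :
    ∫ θ in (0 : ℝ)..2 * π, exp (I * θ) ^ p = if p = 0 then (2 * π : ℂ) else 0 := by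
  split_ifs with hp
  · simp [hp]
  have hpI : (p * I : ℂ) ≠ 0 := mul_ne_zero (Int.cast_ne_zero.2 hp) I_ne_zero
  simp_rw [← exp_int_mul, ← mul_assoc]
  rw [integral_exp_mul_complex hpI, show (p * I * ((2 * π : ℝ) : ℂ)) = p * (2 * π * I) by
    push_cast; ring, exp_int_mul_two_pi_mul_I]
  simp

lemma sum_exp_two_pi_I_mul_div_zpow {N : ℕ} (hN : 0 < N) (p : ℤ) :
    ∑ ℓ ∈ range N, exp (2 * π * I * ℓ / N) ^ p = if (N : ℤ) ∣ p then (N : ℂ) else 0 := by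
  set ζ := exp (2 * π * I / N)
  have hζ : IsPrimitiveRoot ζ N := isPrimitiveRoot_exp N hN.ne'
  have hpow : ∀ ℓ : ℕ, exp (2 * π * I * ℓ / N) ^ p = (ζ ^ p) ^ ℓ := fun ℓ => by
    have hℓ : exp (2 * π * I * ℓ / N) = ζ ^ ℓ := by rw [← exp_nat_mul]; ring_nf
    rw [hℓ, ← zpow_natCast, ← zpow_natCast (ζ ^ p), ← zpow_mul, ← zpow_mul, mul_comm]
  have hζp : (ζ ^ p) ^ N = 1 := by
    rw [← zpow_natCast, ← zpow_mul, mul_comm, zpow_mul, zpow_natCast, hζ.pow_eq_one, one_zpow]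
  simp_rw [hpow]
  split_ifs with hp
  · simp [(hζ.zpow_eq_one_iff_dvd p).2 hp]
  · rw [geom_sum_eq (mt (hζ.zpow_eq_one_iff_dvd p).1 hp), hζp, sub_self, zero_div]

lemma circleFourierCoeff_of_eqOn_sum {u : ℂ → ℂ} (S : Finset ℤ) (a : ℤ → ℂ)
    (hu : ∀ z : ℂ, ‖z‖ = 1 → u z = ∑ m ∈ S, a m * z ^ m) (j : ℤ) :
    circleFourierCoeff u j = if j ∈ S then a j else 0 := by
  have hexp : ∀ θ : ℝ, exp (I * θ) ^ (-j) * u (exp (I * θ))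
      = ∑ m ∈ S, a m * exp (I * θ) ^ (m - j) := fun θ => by
    rw [hu _ (norm_exp_I_mul_ofReal θ), mul_sum]
    refine sum_congr rfl fun m _ => ?_
    rw [sub_eq_add_neg, zpow_add₀ (exp_ne_zero _)]
    ring
  have hint : ∀ m ∈ S, IntervalIntegrable (fun θ : ℝ => a m * exp (I * θ) ^ (m - j))
      MeasureTheory.volume 0 (2 * π) := fun m _ =>
    (continuous_const.mul (continuous_exp_I_mul_zpow _)).intervalIntegrable _ _
  simp_rw [circleFourierCoeff, hexp, intervalIntegral.integral_finsetSum hint,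
    intervalIntegral.integral_const_mul, integral_exp_I_mul_zpow, sub_eq_zero]
  simp only [mul_ite, mul_zero, sum_ite_eq']
  split_ifs
  · field_simp
  · simp

lemma norm_circleFourierCoeff_le {u : ℂ → ℂ} {C : ℝ} (hC : ∀ z : ℂ, ‖z‖ = 1 → ‖u z‖ ≤ C)
    (j : ℤ) : ‖circleFourierCoeff u j‖ ≤ C := by
  have hint : ‖∫ θ in (0 : ℝ)..2 * π, exp (I * θ) ^ (-j) * u (exp (I * θ))‖ ≤ C * |2 * π - 0| :=
    intervalIntegral.norm_integral_le_of_norm_le_const fun θ _ => by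
      rw [norm_mul, norm_zpow, norm_exp_I_mul_ofReal, one_zpow, one_mul]
      exact hC _ (norm_exp_I_mul_ofReal θ)
  rw [sub_zero, abs_of_pos Real.two_pi_pos] at hint
  rw [circleFourierCoeff, norm_mul, show ‖(1 / (2 * π) : ℂ)‖ = 1 / (2 * π) by
    norm_num [abs_of_pos Real.pi_pos]]
  calc 1 / (2 * π) * ‖∫ θ in (0 : ℝ)..2 * π, exp (I * θ) ^ (-j) * u (exp (I * θ))‖
      ≤ 1 / (2 * π) * (C * (2 * π)) := by gcongr
    _ = C := by field_simp

lemma hasSum_circleFourierCoeff {u : ℂ → ℂ} {f : ℕ → ℂ → ℂ} {C : ℕ → ℝ}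
    (hf : ∀ n, Continuous fun θ : ℝ => f n (exp (I * θ))) (hC : Summable C)
    (hfC : ∀ n, ∀ z : ℂ, ‖z‖ = 1 → ‖f n z‖ ≤ C n)
    (hu : ∀ z : ℂ, ‖z‖ = 1 → HasSum (fun n => f n z) (u z)) (j : ℤ) :
    HasSum (fun n => circleFourierCoeff (f n) j) (circleFourierCoeff u j) := by
  refine HasSum.mul_left _ <| intervalIntegral.hasSum_integral_of_dominated_convergence
    (fun n _ => C n) (fun n => ((continuous_exp_I_mul_zpow _).mul (hf n)).aestronglyMeasurable)
    (fun n => .of_forall fun θ _ => ?_) (.of_forall fun _ _ => hC)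
    intervalIntegrable_const (.of_forall fun θ _ => (hu _ (norm_exp_I_mul_ofReal θ)).mul_left _)
  rw [norm_mul, norm_zpow, norm_exp_I_mul_ofReal, one_zpow, one_mul]
  exact hfC n _ (norm_exp_I_mul_ofReal θ)

lemma discreteFourier_of_eqOn_sum {u : ℂ → ℂ} {N : ℕ} (hN : 0 < N) (S : Finset ℤ) (a : ℤ → ℂ)
    (hu : ∀ z : ℂ, ‖z‖ = 1 → u z = ∑ m ∈ S, a m * z ^ m) (j : ℤ) :
    discreteFourier u N j = ∑ m ∈ S with (N : ℤ) ∣ m - j, a m := by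
  have hexp : ∀ ℓ : ℕ, exp (2 * π * I * ℓ / N) ^ (-j) * u (exp (2 * π * I * ℓ / N))
      = ∑ m ∈ S, a m * exp (2 * π * I * ℓ / N) ^ (m - j) := fun ℓ => by
    rw [hu _ (norm_exp_two_pi_I_mul_div ℓ N), mul_sum]
    refine sum_congr rfl fun m _ => ?_
    rw [sub_eq_add_neg, zpow_add₀ (exp_ne_zero _)]
    ring
  have hN' : (N : ℂ) ≠ 0 := Nat.cast_ne_zero.2 hN.ne'
  simp_rw [discreteFourier, hexp]
  rw [sum_comm, mul_sum, sum_filter]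
  refine sum_congr rfl fun m _ => ?_
  rw [← mul_sum, sum_exp_two_pi_I_mul_div_zpow hN]
  split_ifs
  · field_simp
  · simp

lemma hasSum_discreteFourier {u : ℂ → ℂ} {f : ℕ → ℂ → ℂ}
    (hu : ∀ z : ℂ, ‖z‖ = 1 → HasSum (fun n => f n z) (u z)) (N : ℕ) (j : ℤ) :
    HasSum (fun n => discreteFourier (f n) N j) (discreteFourier u N j) :=
  (hasSum_sum fun ℓ _ => (hu _ (norm_exp_two_pi_I_mul_div ℓ N)).mul_left _).mul_left _

lemma sub_abs_le_abs_of_dvd_sub {N : ℕ} {m j : ℤ} (hdvd : (N : ℤ) ∣ m - j) (hne : m ≠ j) :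
    (N : ℤ) - |j| ≤ |m| := by
  have hN : (N : ℤ) ≤ |m - j| :=
    Int.le_of_dvd (abs_pos.2 (sub_ne_zero.2 hne)) ((dvd_abs _ _).2 hdvd)
  linarith [abs_sub m j]

lemma card_filter_dvd_sub_ne_mul_le {M N : ℕ} (hN : 0 < N) {j : ℤ} (hj : |j| ≤ M) :
    N * #{m ∈ Icc (-(M : ℤ)) M | (N : ℤ) ∣ m - j ∧ m ≠ j} ≤ 2 * M := by
  set A := {m ∈ Icc (-(M : ℤ)) M | (N : ℤ) ∣ m - j ∧ m ≠ j}
  have hN' : (0 : ℤ) < N := by exact_mod_cast hN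
  obtain ⟨hj₁, hj₂⟩ := abs_le.1 hj
  -- the aliases are `j + s * N` with `s ≠ 0` and `-(M + j) ≤ s * N ≤ M - j`
  set T := (Icc (-((M + j) / N)) ((M - j) / N)).erase 0
  have hsub : A ⊆ T.image fun s => j + s * N := by
    intro m hm
    obtain ⟨hmM, ⟨s, hs⟩, hmj⟩ := mem_filter.1 hm
    rw [mem_Icc] at hmM
    have hs0 : s ≠ 0 := by rintro rfl; omega
    refine mem_image.2 ⟨s, mem_erase.2 ⟨hs0, mem_Icc.2 ⟨?_, ?_⟩⟩, by linarith⟩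
    · rw [neg_le, Int.le_ediv_iff_mul_le hN']
      linarith
    · rw [Int.le_ediv_iff_mul_le hN']
      linarith
  have hT : (#T : ℤ) = (M - j) / N + (M + j) / N := by
    have h₁ : 0 ≤ (M - j) / N := Int.ediv_nonneg (by omega) hN'.le
    have h₂ : 0 ≤ (M + j) / N := Int.ediv_nonneg (by omega) hN'.le
    rw [card_erase_of_mem (mem_Icc.2 ⟨by omega, h₁⟩), Int.card_Icc]
    omega
  have hA : (#A : ℤ) ≤ (M - j) / N + (M + j) / N :=
    hT ▸ Nat.cast_le.2 ((card_le_card hsub).trans card_image_le)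
  have := Int.mul_ediv_self_le (x := M - j) hN'.ne'
  have := Int.mul_ediv_self_le (x := M + j) hN'.ne'
  zify
  nlinarith

def IsLaurentOnCircle (M : ℕ) (u : ℂ → ℂ) : Prop :=
  ∃ a : ℤ → ℂ, ∀ z : ℂ, ‖z‖ = 1 → u z = ∑ m ∈ Icc (-(M : ℤ)) M, a m * z ^ m

namespace IsLaurentOnCircle

variable {M M' : ℕ} {u v : ℂ → ℂ}

lemma of_sum {ι : Type*} (s : Finset ι) (e : ι → ℤ) (a : ι → ℂ) (he : ∀ i ∈ s, |e i| ≤ M)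
    (hu : ∀ z : ℂ, ‖z‖ = 1 → u z = ∑ i ∈ s, a i * z ^ e i) : IsLaurentOnCircle M u := by
  classical
  have hmaps : ∀ i ∈ s, e i ∈ Icc (-(M : ℤ)) M := fun i hi => mem_Icc.2 (abs_le.1 (he i hi))
  refine ⟨fun m => ∑ i ∈ s with e i = m, a i, fun z hz => ?_⟩
  rw [hu z hz, ← sum_fiberwise_of_maps_to hmaps]
  refine sum_congr rfl fun m _ => ?_
  rw [sum_mul]
  exact sum_congr rfl fun i hi => by rw [(mem_filter.1 hi).2]

lemma laurentEval (c : ℤ → ℂ) (d : ℕ) : IsLaurentOnCircle d (laurentEval c d) :=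
  ⟨c, fun _ _ => rfl⟩

lemma const (w : ℂ) : IsLaurentOnCircle 0 fun _ => w :=
  ⟨fun _ => w, fun z _ => by simp⟩

lemma mul (hu : IsLaurentOnCircle M u) (hv : IsLaurentOnCircle M' v) :
    IsLaurentOnCircle (M + M') fun z => u z * v z := by
  obtain ⟨a, ha⟩ := hu
  obtain ⟨b, hb⟩ := hv
  refine of_sum (Icc (-(M : ℤ)) M ×ˢ Icc (-(M' : ℤ)) M') (fun p => p.1 + p.2)
    (fun p => a p.1 * b p.2) (fun p hp => ?_) (fun z hz => ?_)
  · obtain ⟨h1, h2⟩ := mem_product.1 hp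
    rw [mem_Icc] at h1 h2
    push_cast
    exact abs_le.2 ⟨by omega, by omega⟩
  · rw [ha z hz, hb z hz, sum_mul_sum, sum_product]
    refine sum_congr rfl fun m _ => sum_congr rfl fun n _ => ?_
    rw [zpow_add₀ (ne_zero_of_norm_ne_zero (hz ▸ one_ne_zero))]
    ring

lemma const_mul (hu : IsLaurentOnCircle M u) (w : ℂ) :
    IsLaurentOnCircle M fun z => w * u z := by
  simpa using (const w).mul hu

lemma pow (hu : IsLaurentOnCircle M u) (k : ℕ) : IsLaurentOnCircle (M * k) fun z => u z ^ k := by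
  induction k with
  | zero => simpa using const 1
  | succ k ih => simpa only [pow_succ, mul_add, mul_one] using ih.mul hu

lemma conjugate (hu : IsLaurentOnCircle M u) : IsLaurentOnCircle M fun z => conj (u z) := by
  obtain ⟨a, ha⟩ := hu
  refine of_sum (Icc (-(M : ℤ)) M) (fun m => -m) (fun m => conj (a m))
    (fun m hm => ?_) (fun z hz => ?_)
  · rw [mem_Icc] at hm
    exact abs_le.2 ⟨by omega, by omega⟩
  · rw [ha z hz, map_sum]
    refine sum_congr rfl fun m _ => ?_
    rw [map_mul, map_zpow₀, ← RCLike.inv_eq_conj hz, inv_zpow, zpow_neg]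

lemma normSq (hu : IsLaurentOnCircle M u) :
    IsLaurentOnCircle (2 * M) fun z => ((‖u z‖ ^ 2 : ℝ) : ℂ) := by
  simpa only [two_mul, mul_conj, normSq_eq_norm_sq] using hu.mul hu.conjugate

lemma continuous_comp_exp (hu : IsLaurentOnCircle M u) :
    Continuous fun θ : ℝ => u (exp (I * θ)) := by
  obtain ⟨a, ha⟩ := hu
  simp_rw [fun θ : ℝ => ha _ (norm_exp_I_mul_ofReal θ)]
  exact continuous_finsetSum _ fun m _ => continuous_const.mul (continuous_exp_I_mul_zpow m)

lemma eq_sum_circleFourierCoeff (hu : IsLaurentOnCircle M u) {z : ℂ} (hz : ‖z‖ = 1) :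
    u z = ∑ m ∈ Icc (-(M : ℤ)) M, circleFourierCoeff u m * z ^ m := by
  obtain ⟨a, ha⟩ := hu
  rw [ha z hz]
  refine sum_congr rfl fun m hm => ?_
  rw [circleFourierCoeff_of_eqOn_sum _ a ha, if_pos hm]

lemma circleFourierCoeff_eq_zero (hu : IsLaurentOnCircle M u) {j : ℤ} (hj : (M : ℤ) < |j|) :
    circleFourierCoeff u j = 0 := by
  obtain ⟨a, ha⟩ := hu
  rw [circleFourierCoeff_of_eqOn_sum _ a ha, if_neg]
  rw [mem_Icc, ← abs_le]
  exact hj.not_ge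

lemma norm_circleFourierCoeff_le_mul_zpow (hu : IsLaurentOnCircle M u) {C ρ : ℝ}
    (hC : ∀ z : ℂ, ‖z‖ = 1 → ‖u z‖ ≤ C) (hρ : 1 ≤ ρ) (j : ℤ) :
    ‖circleFourierCoeff u j‖ ≤ C * ρ ^ ((M : ℤ) - |j|) := by
  have hC₀ : 0 ≤ C := (norm_nonneg _).trans (hC 1 (by simp))
  rcases le_or_gt |j| (M : ℤ) with hj | hj
  · calc ‖circleFourierCoeff u j‖ ≤ C := norm_circleFourierCoeff_le hC j
      _ ≤ C * ρ ^ ((M : ℤ) - |j|) := le_mul_of_one_le_right hC₀ (one_le_zpow₀ hρ (by omega))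
  · rw [hu.circleFourierCoeff_eq_zero hj, norm_zero]
    positivity

lemma discreteFourier_sub_circleFourierCoeff (hu : IsLaurentOnCircle M u) {N : ℕ} (hN : 0 < N)
    (j : ℤ) : discreteFourier u N j - circleFourierCoeff u j
      = ∑ m ∈ Icc (-(M : ℤ)) M with (N : ℤ) ∣ m - j ∧ m ≠ j, circleFourierCoeff u m := by
  have hexp := fun z (hz : ‖z‖ = 1) => hu.eq_sum_circleFourierCoeff hz
  rw [discreteFourier_of_eqOn_sum hN _ _ hexp, ← filter_filter,
    ← sum_filter_add_sum_filter_not _ (fun m => m ≠ j), circleFourierCoeff_of_eqOn_sum _ _ hexp j]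
  simp only [not_not, sum_filter, sum_ite_eq', mem_filter, sub_self, dvd_zero, and_true,
    add_sub_cancel_right]

lemma norm_discreteFourier_sub_circleFourierCoeff_le
    (hu : IsLaurentOnCircle M u) {C ρ : ℝ} (hC : ∀ z : ℂ, ‖z‖ = 1 → ‖u z‖ ≤ C) (hρ : 1 ≤ ρ)
    {N : ℕ} (hN : 0 < N) {j : ℤ} (hjN : 2 * |j| ≤ N) :
    ‖discreteFourier u N j - circleFourierCoeff u j‖
      ≤ 2 * M / N * (C * ρ ^ ((M : ℤ) + |j| - N)) := by
  set A := {m ∈ Icc (-(M : ℤ)) M | (N : ℤ) ∣ m - j ∧ m ≠ j}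
  have hC₀ : 0 ≤ C := (norm_nonneg _).trans (hC 1 (by simp))
  have hterm : ∀ m ∈ A, ‖circleFourierCoeff u m‖ ≤ C * ρ ^ ((M : ℤ) + |j| - N) := fun m hm => by
    obtain ⟨-, hdvd, hne⟩ := mem_filter.1 hm
    have := sub_abs_le_abs_of_dvd_sub hdvd hne
    refine (hu.norm_circleFourierCoeff_le_mul_zpow hC hρ m).trans ?_
    exact mul_le_mul_of_nonneg_left (zpow_le_zpow_right₀ hρ (by omega)) hC₀
  have hcard : (#A : ℝ) ≤ 2 * M / N := by
    rcases le_or_gt |j| M with hj | hj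
    · rw [le_div_iff₀ (by positivity), mul_comm]
      exact_mod_cast card_filter_dvd_sub_ne_mul_le hN hj
    · have hA : A = ∅ := eq_empty_of_forall_notMem fun m hm => by
        obtain ⟨hmM, hdvd, hne⟩ := mem_filter.1 hm
        have := sub_abs_le_abs_of_dvd_sub hdvd hne
        have := abs_le.2 (mem_Icc.1 hmM)
        omega
      rw [hA, card_empty, Nat.cast_zero]
      positivity
  rw [hu.discreteFourier_sub_circleFourierCoeff hN]
  calc ‖∑ m ∈ A, circleFourierCoeff u m‖ ≤ #A * (C * ρ ^ ((M : ℤ) + |j| - N)) := by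
        simpa using norm_sum_le_of_le A hterm
    _ ≤ 2 * M / N * (C * ρ ^ ((M : ℤ) + |j| - N)) := by
        gcongr

end IsLaurentOnCircle

noncomputable def logSeriesTerm (b : ℂ → ℂ) (n : ℕ) (z : ℂ) : ℂ :=
  ((-(‖b z‖ ^ 2) ^ (n + 1) / (2 * (n + 1)) : ℝ) : ℂ)

section LogSeries

variable {b : ℂ → ℂ} {M : ℕ} {t : ℝ}

lemma hasSum_logSeriesTerm {z : ℂ} (hz : ‖b z‖ < 1) :
    HasSum (fun n => logSeriesTerm b n z) (Real.log (Real.sqrt (1 - ‖b z‖ ^ 2))) := by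
  have hx : |‖b z‖ ^ 2| < 1 := by
    rw [abs_of_nonneg (by positivity)]
    exact pow_lt_one₀ (norm_nonneg _) hz two_ne_zero
  have hlog : Real.log (Real.sqrt (1 - ‖b z‖ ^ 2)) = -1 / 2 * -Real.log (1 - ‖b z‖ ^ 2) := by
    rw [Real.log_sqrt (by linarith [abs_lt.1 hx])]
    ring
  refine Complex.hasSum_ofReal.2 ?_
  rw [hlog]
  exact ((Real.hasSum_pow_div_log_of_abs_lt_one hx).mul_left (-1 / 2)).congr_fun fun n => by
    field_simp

lemma norm_logSeriesTerm_le {z : ℂ} (hz : ‖b z‖ ≤ t) (n : ℕ) :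
    ‖logSeriesTerm b n z‖ ≤ (t ^ 2) ^ (n + 1) / (n + 1) / 2 := by
  rw [logSeriesTerm, norm_real, norm_div, norm_neg, Real.norm_of_nonneg (by positivity),
    Real.norm_of_nonneg (by positivity), div_div, mul_comm 2]
  gcongr

lemma IsLaurentOnCircle.logSeriesTerm (hb : IsLaurentOnCircle M b) (n : ℕ) :
    IsLaurentOnCircle (2 * M * (n + 1)) (logSeriesTerm b n) := by
  convert (hb.normSq.pow (n + 1)).const_mul (-1 / (2 * (n + 1))) using 2 with z
  simp only [_root_.logSeriesTerm]
  push_cast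
  ring

variable {r : ℝ}

lemma pow_two_mul_mul_pow_eq_pow (hr : 0 < r) (hrM : r ^ (2 * M) = t⁻¹)
    (n : ℕ) : (t ^ 2) ^ n * r ^ (2 * M * n) = t ^ n := by
  have ht : t ≠ 0 := by
    rintro rfl
    exact pow_ne_zero _ hr.ne' (hrM.trans inv_zero)
  rw [pow_mul r, hrM, inv_pow, ← pow_mul, mul_comm 2 n, pow_mul]
  field_simp

lemma norm_circleFourierCoeff_logSeriesTerm_le (hb : IsLaurentOnCircle M b)
    (hbt : ∀ z : ℂ, ‖z‖ = 1 → ‖b z‖ ≤ t) (hr : 1 ≤ r) (hrM : r ^ (2 * M) = t⁻¹) (n : ℕ) (j : ℤ) :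
    ‖circleFourierCoeff (logSeriesTerm b n) j‖ ≤ r ^ (-|j|) / 2 * (t ^ (n + 1) / (n + 1)) := by
  refine ((hb.logSeriesTerm n).norm_circleFourierCoeff_le_mul_zpow
    (fun z hz => norm_logSeriesTerm_le (hbt z hz) n) hr j).trans_eq ?_
  rw [sub_eq_add_neg, zpow_add₀ (by positivity), zpow_natCast,
    ← pow_two_mul_mul_pow_eq_pow (by positivity) hrM (n + 1)]
  ring

lemma norm_discreteFourier_sub_circleFourierCoeff_logSeriesTerm_le (hb : IsLaurentOnCircle M b)
    (hbt : ∀ z : ℂ, ‖z‖ = 1 → ‖b z‖ ≤ t) (hr : 1 ≤ r) (hrM : r ^ (2 * M) = t⁻¹) {N : ℕ}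
    (hN : 0 < N) {j : ℤ} (hjN : 2 * |j| ≤ N) (n : ℕ) :
    ‖discreteFourier (logSeriesTerm b n) N j - circleFourierCoeff (logSeriesTerm b n) j‖
      ≤ 2 * M / N * r ^ (|j| - N) * t ^ (n + 1) := by
  refine ((hb.logSeriesTerm n).norm_discreteFourier_sub_circleFourierCoeff_le
    (fun z hz => norm_logSeriesTerm_le (hbt z hz) n) hr hN hjN).trans_eq ?_
  rw [add_sub_assoc, zpow_add₀ (by positivity), zpow_natCast,
    ← pow_two_mul_mul_pow_eq_pow (by positivity) hrM (n + 1)]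
  push_cast
  field_simp

lemma hasSum_circleFourierCoeff_logSeriesTerm (hb : IsLaurentOnCircle M b)
    (hbt : ∀ z : ℂ, ‖z‖ = 1 → ‖b z‖ ≤ t) (ht : t < 1) (j : ℤ) :
    HasSum (fun n => circleFourierCoeff (logSeriesTerm b n) j)
      (circleFourierCoeff (fun z => (Real.log (Real.sqrt (1 - ‖b z‖ ^ 2)) : ℂ)) j) := by
  have ht₀ : 0 ≤ t := (norm_nonneg _).trans (hbt 1 (by simp))
  have ht2 : |t ^ 2| < 1 := by
    rw [abs_of_nonneg (by positivity)]
    exact pow_lt_one₀ ht₀ ht two_ne_zero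
  exact hasSum_circleFourierCoeff (fun n => (hb.logSeriesTerm n).continuous_comp_exp)
    ((Real.hasSum_pow_div_log_of_abs_lt_one ht2).summable.div_const 2)
    (fun n z hz => norm_logSeriesTerm_le (hbt z hz) n)
    (fun z hz => hasSum_logSeriesTerm ((hbt z hz).trans_lt ht)) j

lemma norm_circleFourierCoeff_log_le (hb : IsLaurentOnCircle M b)
    (hbt : ∀ z : ℂ, ‖z‖ = 1 → ‖b z‖ ≤ t) (ht : t < 1) (hr : 1 ≤ r) (hrM : r ^ (2 * M) = t⁻¹)
    (j : ℤ) :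
    ‖circleFourierCoeff (fun z => (Real.log (Real.sqrt (1 - ‖b z‖ ^ 2)) : ℂ)) j‖
      ≤ r ^ (-|j|) / 2 * -Real.log (1 - t) := by
  have ht₀ : 0 ≤ t := (norm_nonneg _).trans (hbt 1 (by simp))
  exact (hasSum_circleFourierCoeff_logSeriesTerm hb hbt ht j).norm_le_of_bounded
    ((Real.hasSum_pow_div_log_of_abs_lt_one (abs_lt.2 ⟨by linarith, ht⟩)).mul_left _)
    (norm_circleFourierCoeff_logSeriesTerm_le hb hbt hr hrM · j)

lemma norm_circleFourierCoeff_sub_discreteFourier_log_le (hb : IsLaurentOnCircle M b)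
    (hbt : ∀ z : ℂ, ‖z‖ = 1 → ‖b z‖ ≤ t) (ht : t < 1) (hr : 1 ≤ r) (hrM : r ^ (2 * M) = t⁻¹)
    {N : ℕ} (hN : 0 < N) {j : ℤ} (hjN : 2 * |j| ≤ N) :
    ‖circleFourierCoeff (fun z => (Real.log (Real.sqrt (1 - ‖b z‖ ^ 2)) : ℂ)) j
        - discreteFourier (fun z => (Real.log (Real.sqrt (1 - ‖b z‖ ^ 2)) : ℂ)) N j‖
      ≤ 2 * M / N * r ^ (|j| - N) * (t / (1 - t)) := by
  have ht₀ : 0 ≤ t := (norm_nonneg _).trans (hbt 1 (by simp))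
  have hdft := hasSum_discreteFourier
    (fun z hz => hasSum_logSeriesTerm ((hbt z hz).trans_lt ht)) N j
  have hbound : HasSum (fun n : ℕ => 2 * M / N * r ^ (|j| - N) * t ^ (n + 1))
      (2 * M / N * r ^ (|j| - N) * (t / (1 - t))) := by
    have h := (hasSum_geometric_of_lt_one ht₀ ht).mul_left (2 * M / N * r ^ (|j| - N) * t)
    rw [mul_assoc _ t, ← div_eq_mul_inv] at h
    exact h.congr_fun fun n => by ring
  refine ((hasSum_circleFourierCoeff_logSeriesTerm hb hbt ht j).sub hdft).norm_le_of_bounded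
    hbound fun n => ?_
  rw [norm_sub_rev]
  exact norm_discreteFourier_sub_circleFourierCoeff_logSeriesTerm_le hb hbt hr hrM hN hjN n

end LogSeries

theorem stmt6_general (d : ℕ) (η : ℝ) (hη : 0 < η) (hη' : η < 1/2)
    (c : ℤ → ℂ)
    (hb : ∀ z : ℂ, ‖z‖ = 1 → ‖laurentEval c d z‖ ≤ 1 - η)
    (r : ℝ) (hr : 1 < r) (hrd : r ^ (2 * d) = (1 - η)⁻¹)
    (N : ℕ) (hN : 0 < N) (hNlarge : 2 * (d : ℝ) / η < N) :
    (∀ j : ℤ, ‖circleFourierCoeff (logAbsB c d) j‖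
        ≤ (1/2) * r ^ (-(j.natAbs : ℤ)) * |Real.log η|) ∧
    (∀ j : ℕ, 2 * j ≤ N →
      ‖circleFourierCoeff (logAbsB c d) j - discreteFourier (logAbsB c d) N j‖
        ≤ 2 * r ^ ((j : ℤ) - (N : ℤ)) * |Real.log η|) := by
  have hbL := IsLaurentOnCircle.laurentEval c d
  have hη₁ : 1 - η < 1 := by linarith
  have hlog : |Real.log η| = -Real.log (1 - (1 - η)) := by
    rw [sub_sub_cancel, abs_of_neg (Real.log_neg hη (by linarith))]
  refine ⟨fun j => ?_, fun j hj => ?_⟩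
  · rw [Int.natCast_natAbs, hlog]
    exact (norm_circleFourierCoeff_log_le hbL hb hη₁ hr.le hrd j).trans_eq (by ring)
  · have hjN : 2 * |(j : ℤ)| ≤ N := by rw [Nat.abs_cast]; exact_mod_cast hj
    have h := norm_circleFourierCoeff_sub_discreteFourier_log_le hbL hb hη₁ hr.le hrd hN hjN
    rw [Nat.abs_cast, sub_sub_cancel] at h
    have hdN : 2 * d / N * ((1 - η) / η) ≤ 1 - η := by
      have := (div_lt_iff₀ hη).1 hNlarge
      rw [div_mul_div_comm, div_le_iff₀ (by positivity)]
      nlinarith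
    have hη_log : 1 - η ≤ |Real.log η| := by
      rw [hlog, sub_sub_cancel]
      linarith [Real.log_le_sub_one_of_pos hη]
    have hpos : 0 < r ^ ((j : ℤ) - N) := zpow_pos (by linarith) _
    refine h.trans ?_
    nlinarith

/-- With `r_j` the Fourier coefficients of `log√(1−|b|²)` and `r̂_j` their
DFT approximations on `N` points (`N` even, `N > 2d/η`):
(i) `|r_j| ≤ (1/2) r^{−|j|} |log η|` for all `j ∈ ℤ`;
(ii) `|r_j − r̂_j| ≤ 2 r^{j−N} |log η|` for `0 ≤ j ≤ N/2`. -/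
theorem stmt6 (d : ℕ) (hd : 1 ≤ d) (η : ℝ) (hη : 0 < η) (hη' : η < 1/2)
    (c : ℤ → ℂ)
    (hb : ∀ z : ℂ, ‖z‖ = 1 → ‖laurentEval c d z‖ ≤ 1 - η)
    (r : ℝ) (hr : 1 < r) (hrd : r ^ (2 * d) = (1 - η)⁻¹)
    (N : ℕ) (hN : 0 < N) (hNeven : 2 ∣ N) (hNlarge : 2 * (d : ℝ) / η < N) :
    (∀ j : ℤ, ‖circleFourierCoeff (logAbsB c d) j‖
        ≤ (1/2) * r ^ (-(j.natAbs : ℤ)) * |Real.log η|) ∧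
    (∀ j : ℕ, 2 * j ≤ N →
      ‖circleFourierCoeff (logAbsB c d) j - discreteFourier (logAbsB c d) N j‖
        ≤ 2 * r ^ ((j : ℤ) - (N : ℤ)) * |Real.log η|) :=
  stmt6_general d η hη hη' c hb r hr hrd N hN hNlarge
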